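/- Suppose u, v : ℕ → H and μ : ℕ → ℝ form a GCM trajectory, suppose there is μ̄ with μ_t ≤ μ̄ < 1/L for all t (so that c := 1/(2μ̄) − L/2 > 0), and suppose Ψ is bounded below with Ψ_* := inf Ψ. Then for every T ∈ ℕ, ∑_{t=0}^{T} ‖u_{t+1} − v_{t+1}‖² ≤ (Ψ(u_0) − Ψ_*)/c; consequently the series ∑_t ‖u_{t+1} − v_{t+1}‖² converges and ‖u_{t+1} − v_{t+1}‖ → 0 as t → ∞. -/

import Mathlib

open Filter Topology RealInnerProductSpace

theorem descent_lemma' {H : Type*} [NormedAddCommGroup H] [InnerProductSpace ℝ H]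
    [CompleteSpace H]
    (f : H → ℝ) (gradf : H → H) (L : ℝ)
    (hdiff : ∀ x, HasGradientAt f (gradf x) x)
    (hlip : ∀ x y, ‖gradf x - gradf y‖ ≤ L * ‖x - y‖)
    (x y : H) :
    f y ≤ f x + ⟪gradf x, y - x⟫ + L / 2 * ‖y - x‖ ^ 2 := by
  set d := y - x with hd
  set g : ℝ → ℝ := fun t => f (x + t • d) - t * ⟪gradf x, d⟫ - L * t ^ 2 / 2 * ‖d‖ ^ 2
    with hg
  have hderiv : ∀ t : ℝ, HasDerivAt g
      (⟪gradf (x + t • d), d⟫ - ⟪gradf x, d⟫ - L * t * ‖d‖ ^ 2) t := by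
    intro t
    have hc : HasDerivAt (fun t : ℝ => x + t • d) d t := by
      simpa using ((hasDerivAt_id t).smul_const d).const_add x
    have h1 : HasDerivAt (fun t : ℝ => f (x + t • d)) ⟪gradf (x + t • d), d⟫ t := by
      have := ((hdiff (x + t • d)).hasFDerivAt).comp_hasDerivAt t hc
      simpa [InnerProductSpace.toDual_apply_apply, Function.comp_def] using this
    have h2 : HasDerivAt (fun t : ℝ => t * ⟪gradf x, d⟫) ⟪gradf x, d⟫ t := by
      simpa using (hasDerivAt_id t).mul_const (⟪gradf x, d⟫ : ℝ)
    have h3 : HasDerivAt (fun t : ℝ => L * t ^ 2 / 2 * ‖d‖ ^ 2) (L * t * ‖d‖ ^ 2) t := by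
      have : HasDerivAt (fun t : ℝ => t ^ 2) (2 * t) t := by
        simpa using hasDerivAt_pow 2 t
      have := ((this.const_mul L).div_const 2).mul_const (‖d‖ ^ 2)
      exact this.congr_deriv (by ring)
    exact (h1.sub h2).sub h3
  have hanti : AntitoneOn g (Set.Icc 0 1) := by
    apply antitoneOn_of_deriv_nonpos (convex_Icc 0 1)
    · exact fun t _ => ((hderiv t).continuousAt).continuousWithinAt
    · intro t ht
      exact ((hderiv t).differentiableAt).differentiableWithinAt
    · intro t ht
      rw [interior_Icc] at ht
      rw [(hderiv t).deriv]
      have hb : ⟪gradf (x + t • d), d⟫ - ⟪gradf x, d⟫ ≤ L * t * ‖d‖ ^ 2 := by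
        have h1 : ⟪gradf (x + t • d) - gradf x, d⟫ ≤ ‖gradf (x + t • d) - gradf x‖ * ‖d‖ :=
          real_inner_le_norm _ _
        have h2 : ‖gradf (x + t • d) - gradf x‖ ≤ L * (t * ‖d‖) := by
          have := hlip (x + t • d) x
          simpa [norm_smul, abs_of_pos ht.1, mul_assoc] using this
        have h3 : ⟪gradf (x + t • d) - gradf x, d⟫ = ⟪gradf (x + t • d), d⟫ - ⟪gradf x, d⟫ :=
          inner_sub_left _ _ _
        have h4 : ‖gradf (x + t • d) - gradf x‖ * ‖d‖ ≤ L * (t * ‖d‖) * ‖d‖ :=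
          mul_le_mul_of_nonneg_right h2 (norm_nonneg _)
        nlinarith [norm_nonneg d]
      linarith [hb]
  have h01 : g 1 ≤ g 0 := hanti (by norm_num) (by norm_num) (by norm_num)
  have e2 : x + d = y := by simp [hd]
  simp only [hg, one_smul, zero_smul, add_zero] at h01
  rw [e2] at h01
  norm_num at h01
  linarith [h01]

/-- `uplus` is a prox-output at `(v, μ)`: it is a global minimizer over `H` of
`w ↦ φ(w) + ⟪∇f(v), w − v⟫ + (1/(2μ))‖w − v‖²`. -/
def IsProxOutput {H : Type*} [NormedAddCommGroup H] [InnerProductSpace ℝ H]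
    (φ : H → ℝ) (gradf : H → H) (v : H) (μ : ℝ) (uplus : H) : Prop :=
  ∀ w : H,
    φ uplus + ⟪gradf v, uplus - v⟫ + 1 / (2 * μ) * ‖uplus - v‖ ^ 2 ≤
      φ w + ⟪gradf v, w - v⟫ + 1 / (2 * μ) * ‖w - v‖ ^ 2

/-- along a GCM trajectory with `μ t ≤ μ̄ < 1/L` and `Ψ` bounded
below with infimum `Ψ_*`, setting `c := 1/(2μ̄) − L/2 > 0`, the partial sums
`∑_{t=0}^{T} ‖u_{t+1} − v_{t+1}‖²` are bounded by `(Ψ(u_0) − Ψ_*)/c`; hence the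
series converges and `‖u_{t+1} − v_{t+1}‖ → 0`. -/
theorem gcm_successive_differences_summable
    {H : Type*} [NormedAddCommGroup H] [InnerProductSpace ℝ H] [CompleteSpace H]
    (f φ : H → ℝ) (gradf : H → H) (L : ℝ) (hL : 0 < L)
    (hdiff : ∀ x, HasGradientAt f (gradf x) x)
    (hlip : ∀ x y, ‖gradf x - gradf y‖ ≤ L * ‖x - y‖)
    (Ψ : H → ℝ) (hΨ : Ψ = fun x => f x + φ x)
    (u v : ℕ → H) (μ : ℕ → ℝ)
    (hμpos : ∀ t, 0 < μ t)
    (hcorr : ∀ t, Ψ (v (t + 1)) ≤ Ψ (u t))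
    (hprox : ∀ t, IsProxOutput φ gradf (v (t + 1)) (μ t) (u (t + 1)))
    (μbar : ℝ) (hμbar : ∀ t, μ t ≤ μbar) (hμbarL : μbar < 1 / L)
    (c : ℝ) (hc : c = 1 / (2 * μbar) - L / 2)
    (hbdd : BddBelow (Set.range Ψ))
    (Ψstar : ℝ) (hΨstar : Ψstar = ⨅ x, Ψ x) :
    (∀ T : ℕ, ∑ t ∈ Finset.range (T + 1), ‖u (t + 1) - v (t + 1)‖ ^ 2 ≤
        (Ψ (u 0) - Ψstar) / c) ∧
      Summable (fun t => ‖u (t + 1) - v (t + 1)‖ ^ 2) ∧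
        Tendsto (fun t => ‖u (t + 1) - v (t + 1)‖) atTop (𝓝 0) := by
  have hμbarpos : 0 < μbar := lt_of_lt_of_le (hμpos 0) (hμbar 0)
  have hcpos : 0 < c := by
    rw [hc]
    have h1 : μbar * L < 1 := (lt_div_iff₀ hL).mp hμbarL
    have h2 : L / 2 < 1 / (2 * μbar) := by
      rw [div_lt_div_iff₀ two_pos (by positivity)]
      nlinarith
    linarith
  -- key one-step inequality
  have key : ∀ t : ℕ, Ψ (u (t + 1)) + c * ‖u (t + 1) - v (t + 1)‖ ^ 2 ≤ Ψ (u t) := by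
    intro t
    have hne : μ t ≠ 0 := (hμpos t).ne'
    have hD : (0 : ℝ) ≤ ‖u (t + 1) - v (t + 1)‖ ^ 2 := by positivity
    have hdesc : f (u (t + 1)) ≤ f (v (t + 1)) + ⟪gradf (v (t + 1)), u (t + 1) - v (t + 1)⟫ +
        L / 2 * ‖u (t + 1) - v (t + 1)‖ ^ 2 :=
      descent_lemma' f gradf L hdiff hlip (v (t + 1)) (u (t + 1))
    have hproxt : φ (u (t + 1)) + ⟪gradf (v (t + 1)), u (t + 1) - v (t + 1)⟫ +
        1 / (2 * μ t) * ‖u (t + 1) - v (t + 1)‖ ^ 2 ≤ φ (v (t + 1)) := by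
      have h := hprox t (v (t + 1))
      simp only [sub_self, inner_zero_right, norm_zero] at h
      have hz : (0 : ℝ) ^ 2 = 0 := by norm_num
      rw [hz, mul_zero, add_zero, add_zero] at h
      exact h
    have hmono : 1 / (2 * μbar) ≤ 1 / (2 * μ t) := by
      apply one_div_le_one_div_of_le (by linarith [hμpos t])
      linarith [hμbar t]
    have hcd : c * ‖u (t + 1) - v (t + 1)‖ ^ 2 ≤
        1 / (2 * μ t) * ‖u (t + 1) - v (t + 1)‖ ^ 2 -
          L / 2 * ‖u (t + 1) - v (t + 1)‖ ^ 2 := by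
      rw [hc]
      nlinarith [mul_le_mul_of_nonneg_right hmono hD]
    have hΨp : Ψ (u (t + 1)) + c * ‖u (t + 1) - v (t + 1)‖ ^ 2 ≤ Ψ (v (t + 1)) := by
      simp only [hΨ]
      linarith [hdesc, hproxt, hcd]
    exact le_trans hΨp (hcorr t)
  -- telescoping bound
  have tele : ∀ T : ℕ, c * ∑ t ∈ Finset.range T, ‖u (t + 1) - v (t + 1)‖ ^ 2 ≤
      Ψ (u 0) - Ψ (u T) := by
    intro T
    induction T with
    | zero => simp
    | succ n ih =>
      rw [Finset.sum_range_succ, mul_add]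
      have := key n
      linarith
  have hstar_le : ∀ x : H, Ψstar ≤ Ψ x := by
    intro x
    rw [hΨstar]
    exact ciInf_le hbdd x
  have bound : ∀ T : ℕ, ∑ t ∈ Finset.range T, ‖u (t + 1) - v (t + 1)‖ ^ 2 ≤
      (Ψ (u 0) - Ψstar) / c := by
    intro T
    rw [le_div_iff₀ hcpos]
    have := tele T
    have := hstar_le (u T)
    nlinarith
  refine ⟨fun T => bound (T + 1), ?_, ?_⟩
  · have hsum : Summable (fun t => ‖u (t + 1) - v (t + 1)‖ ^ 2) := by
      apply summable_of_sum_range_le (fun t => by positivity) bound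
    exact hsum
  · have hsum : Summable (fun t => ‖u (t + 1) - v (t + 1)‖ ^ 2) :=
      summable_of_sum_range_le (fun t => by positivity) bound
    have h0 : Tendsto (fun t => ‖u (t + 1) - v (t + 1)‖ ^ 2) atTop (𝓝 0) :=
      hsum.tendsto_atTop_zero
    have heq : (fun t => ‖u (t + 1) - v (t + 1)‖) =
        fun t => Real.sqrt (‖u (t + 1) - v (t + 1)‖ ^ 2) := by
      funext t
      rw [Real.sqrt_sq (norm_nonneg _)]
    rw [heq]
    simpa [Real.sqrt_zero] using h0.sqrt
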